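/- arXiv:2407.18186 — 2 statements merged into one kernel-verified Lean document; each statement's English description precedes it below -/
import Mathlib

section
/- For every integer m ≥ 0 and every natural number n, u(m,n) equals the number of partitions μ of n − (m choose 2) satisfying: (1) rank(μ) ≤ −2m; (2) m−1 belongs to the rank-set of μ. -/
open Nat Finset

namespace StrUni

/-- `u m n`: the number of strongly unimodal sequences of weight `n` and rank `m`.
A strongly unimodal sequence is a finite list of positive integers which strictly
increases up to a peak (at 0-based index `k`) and strictly decreases afterwards;
its rank is `ℓ - 2(k+1) + 1` where the peak is the `(k+1)`-st entry. -/
noncomputable def u (m : ℤ) (n : ℕ) : ℕ :=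
  Nat.card {l : List ℕ //
    l.sum = n ∧ (∀ x ∈ l, 0 < x) ∧
    ∃ k : ℕ, k < l.length ∧
      (∀ i : ℕ, i + 1 ≤ k → l.getD i 0 < l.getD (i + 1) 0) ∧
      (∀ i : ℕ, k ≤ i → i + 1 < l.length → l.getD (i + 1) 0 < l.getD i 0) ∧
      (l.length : ℤ) - 2 * ((k : ℤ) + 1) + 1 = m}

/-- A list `l` is a partition of `n`: weakly decreasing, positive parts, sum `n`. -/
def IsPartition (l : List ℕ) (n : ℕ) : Prop :=
  l.Pairwise (· ≥ ·) ∧ (∀ x ∈ l, 0 < x) ∧ l.sum = n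

/-- Dyson's rank of a partition (list form): largest part minus number of parts. -/
def rankL (l : List ℕ) : ℤ := (l.headD 0 : ℤ) - l.length

/-- `r` belongs to the rank-set `{j - λ_{j+1} : j = 0, 1, 2, ...}` of the partition `l`. -/
def InRankSet (l : List ℕ) (r : ℤ) : Prop := ∃ j : ℕ, (j : ℤ) - (l.getD j 0 : ℤ) = r

/-- Dyson's rank of a partition (multiset form). -/
def rank {n : ℕ} (p : n.Partition) : ℤ := (p.parts.sup : ℤ) - p.parts.card

/-- The Andrews–Garvan crank of a partition. -/
def crank {n : ℕ} (p : n.Partition) : ℤ :=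
  if p.parts.count 1 = 0 then (p.parts.sup : ℤ)
  else ((p.parts.filter (fun x => p.parts.count 1 < x)).card : ℤ) - p.parts.count 1

/-- `p n`: the number of partitions of `n`. -/
def partitionCount (n : ℕ) : ℕ := Fintype.card n.Partition

/-- `N m n`: the number of partitions of `n` with rank `m`. -/
def N (m : ℤ) (n : ℕ) : ℕ := (Finset.univ.filter (fun p : n.Partition => rank p = m)).card

/-- `M m n`: the number of partitions of `n` with crank `m`. -/
def M (m : ℤ) (n : ℕ) : ℕ := (Finset.univ.filter (fun p : n.Partition => crank p = m)).card

/-- `ospt n = Σ_{λ⊢n, crank≥0} crank(λ) − Σ_{λ⊢n, rank≥0} rank(λ)`. -/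
def ospt (n : ℕ) : ℤ :=
  (∑ p ∈ Finset.univ.filter (fun p : n.Partition => 0 ≤ crank p), crank p) -
  (∑ p ∈ Finset.univ.filter (fun p : n.Partition => 0 ≤ rank p), rank p)

/-- The conjugate of a partition given as a list. -/
def conjugate (l : List ℕ) : List ℕ :=
  (List.range (l.headD 0)).map (fun i => (l.filter (fun x => i < x)).length)

/-- The `m`-Durfee rectangle size `j` of a partition `l`: the largest `k ≥ 1` with
`λ_{k+m} ≥ k`, and `0` if there is no such `k`. -/
def mDurfee (m : ℕ) (l : List ℕ) : ℕ :=
  Nat.findGreatest (fun k => k ≤ l.getD (k + m - 1) 0) l.length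

/-- `α` in the `m`-Durfee rectangle symbol `(α, β)_{(m+j)×j}`:
the conjugate of `(λ_1 - j, ..., λ_{m+j} - j)`. -/
def mAlpha (m : ℕ) (l : List ℕ) : List ℕ :=
  conjugate ((l.take (m + mDurfee m l)).map (fun x => x - mDurfee m l))

/-- `β` in the `m`-Durfee rectangle symbol: the rows below the rectangle. -/
def mBeta (m : ℕ) (l : List ℕ) : List ℕ := l.drop (m + mDurfee m l)

/-- The Durfee square side of a partition. -/
def durfee (l : List ℕ) : ℕ := mDurfee 0 l

/-- `γ` in the Durfee symbol `(γ, δ)_d`. -/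
def dGamma (l : List ℕ) : List ℕ := mAlpha 0 l

/-- `δ` in the Durfee symbol `(γ, δ)_d`. -/
def dDelta (l : List ℕ) : List ℕ := mBeta 0 l

end StrUni



namespace StrUni


/-! ### helpers -/

lemma two_mul_choose_two (m : ℕ) : 2 * m.choose 2 = m * (m - 1) := by
  induction m with
  | zero => rfl
  | succ k ih =>
    rw [Nat.choose_succ_succ, Nat.choose_one_right, Nat.mul_add, ih]
    cases k with
    | zero => rfl
    | succ j => simp only [Nat.succ_sub_one]; ring

lemma getD_reverse {L : List ℕ} {i : ℕ} (h : i < L.length) :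
    L.reverse.getD i 0 = L.getD (L.length - 1 - i) 0 := by
  rw [List.getD_eq_getElem _ _ (by simpa using h), List.getD_eq_getElem _ _ (by omega),
    List.getElem_reverse]

lemma getD_take {L : List ℕ} {t i : ℕ} (h1 : i < t) (h2 : i < L.length) :
    (L.take t).getD i 0 = L.getD i 0 := by
  rw [List.getD_eq_getElem _ _ (by simp; omega), List.getD_eq_getElem _ _ h2, List.getElem_take]

lemma getD_drop {L : List ℕ} {t i : ℕ} (h : t + i < L.length) :
    (L.drop t).getD i 0 = L.getD (t + i) 0 := by
  rw [List.getD_eq_getElem _ _ (by simp; omega), List.getD_eq_getElem _ _ h, List.getElem_drop]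

lemma headD_eq_getD (L : List ℕ) : L.headD 0 = L.getD 0 0 := by cases L <;> rfl

lemma getD_len_le {L : List ℕ} {i : ℕ} (h : L.length ≤ i) : L.getD i 0 = 0 := by
  rw [List.getD_eq_default]; omega

lemma pairwise_ge_of_adj {L : List ℕ}
    (h : ∀ i, i + 1 < L.length → L.getD (i+1) 0 ≤ L.getD i 0) : L.Pairwise (· ≥ ·) := by
  have key : ∀ d i, i + d < L.length → L.getD (i+d) 0 ≤ L.getD i 0 := by
    intro d
    induction d with
    | zero => simp
    | succ e ih =>
      intro i hid
      have h1 : L.getD (i+e+1) 0 ≤ L.getD (i+e) 0 := h (i+e) (by omega)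
      have h2 : L.getD (i+e) 0 ≤ L.getD i 0 := ih i (by omega)
      rw [show i + (e+1) = i + e + 1 by omega]
      omega
  rw [List.pairwise_iff_getElem]
  intro i j hi hj hij
  have := key (j - i) i (by omega)
  rw [List.getD_eq_getElem _ _ (by omega), List.getD_eq_getElem _ _ hi] at this
  simp only [ge_iff_le]
  convert this using 2
  omega

lemma sorted_getD_le {L : List ℕ} (hs : L.Pairwise (· ≥ ·)) {i j : ℕ} (hij : i ≤ j)
    (hj : j < L.length) : L.getD j 0 ≤ L.getD i 0 := by
  rcases eq_or_lt_of_le hij with rfl | hlt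
  · exact le_refl _
  · rw [List.pairwise_iff_getElem] at hs
    have := hs i j (by omega) hj hlt
    rw [List.getD_eq_getElem _ _ hj, List.getD_eq_getElem _ _ (show i < L.length by omega)]
    exact this

lemma sorted_adj {L : List ℕ} (hs : L.Pairwise (· ≥ ·)) {i : ℕ} (h : i + 1 < L.length) :
    L.getD (i+1) 0 ≤ L.getD i 0 := sorted_getD_le hs (by omega) h

/-! ### staircase -/

def addStair : List ℕ → List ℕ
  | [] => []
  | a :: t => (a + t.length + 1) :: addStair t

def subStair : List ℕ → List ℕ
  | [] => []
  | a :: t => (a - (t.length + 1)) :: subStair t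

@[simp] lemma length_addStair (L : List ℕ) : (addStair L).length = L.length := by
  induction L with
  | nil => rfl
  | cons a t ih => simp [addStair, ih]

@[simp] lemma length_subStair (L : List ℕ) : (subStair L).length = L.length := by
  induction L with
  | nil => rfl
  | cons a t ih => simp [subStair, ih]

lemma getD_addStair (L : List ℕ) {i : ℕ} (h : i < L.length) :
    (addStair L).getD i 0 = L.getD i 0 + (L.length - i) := by
  induction L generalizing i with
  | nil => simp at h
  | cons a t ih =>
    cases i with
    | zero => simp [addStair]; omega
    | succ j =>
      have := ih (i := j) (by simpa using h)
      simpa [addStair] using this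

lemma getD_subStair (L : List ℕ) {i : ℕ} (h : i < L.length) :
    (subStair L).getD i 0 = L.getD i 0 - (L.length - i) := by
  induction L generalizing i with
  | nil => simp at h
  | cons a t ih =>
    cases i with
    | zero => simp [subStair]
    | succ j =>
      have := ih (i := j) (by simpa using h)
      simpa [subStair] using this

lemma sum_addStair (L : List ℕ) :
    2 * (addStair L).sum = 2 * L.sum + L.length * (L.length + 1) := by
  induction L with
  | nil => rfl
  | cons a t ih =>
    simp only [addStair, List.sum_cons, List.length_cons]
    have : (t.length + 1) * (t.length + 1 + 1) = t.length * (t.length + 1) + 2*(t.length+1) := by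
      ring
    omega

lemma addStair_subStair {L : List ℕ} (h : ∀ i, i < L.length → L.length - i ≤ L.getD i 0) :
    addStair (subStair L) = L := by
  induction L with
  | nil => rfl
  | cons a t ih =>
    have h0 := h 0 (by simp)
    simp only [List.getD_cons_zero, List.length_cons, Nat.sub_zero] at h0
    simp only [subStair, addStair, length_subStair]
    rw [List.cons.injEq]
    refine ⟨by omega, ih ?_⟩
    intro i hi
    have := h (i+1) (by simp; omega)
    simp only [List.getD_cons_succ, List.length_cons] at this
    omega

lemma addStair_inj : ∀ {L M : List ℕ}, addStair L = addStair M → L = M := by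
  intro L
  induction L with
  | nil => intro M h; cases M with
    | nil => rfl
    | cons b u => simp [addStair] at h
  | cons a t ih =>
    intro M h
    cases M with
    | nil => simp [addStair] at h
    | cons b u =>
      simp only [addStair, List.cons.injEq] at h
      obtain ⟨h1, h2⟩ := h
      have := ih h2
      subst this
      simp only [List.cons.injEq]
      exact ⟨by omega, trivial⟩

lemma mem_addStair_pos {L : List ℕ} {x : ℕ} (h : x ∈ addStair L) : 0 < x := by
  induction L with
  | nil => simp [addStair] at h
  | cons a t ih =>
    simp only [addStair, List.mem_cons] at h
    rcases h with rfl | h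
    · omega
    · exact ih h

lemma strictDec_addStair {L : List ℕ} (hs : L.Pairwise (· ≥ ·)) {i : ℕ} (h : i + 1 < L.length) :
    (addStair L).getD (i+1) 0 < (addStair L).getD i 0 := by
  rw [getD_addStair _ h, getD_addStair _ (by omega)]
  have := sorted_adj hs h
  omega

/-- getD-based lower bound for strictly decreasing positive lists. -/
lemma getD_lower {L : List ℕ}
    (hdec : ∀ i, i + 1 < L.length → L.getD (i+1) 0 < L.getD i 0)
    (hpos : ∀ x ∈ L, 0 < x) :
    ∀ i, i < L.length → L.length - i ≤ L.getD i 0 := by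
  have key : ∀ d i, i + d + 1 = L.length → d + 1 ≤ L.getD i 0 := by
    intro d
    induction d with
    | zero =>
      intro i hi
      have : L.getD i 0 ∈ L := by
        rw [List.getD_eq_getElem _ _ (by omega)]
        exact List.getElem_mem _
      exact hpos _ this
    | succ e ih =>
      intro i hi
      have h1 := hdec i (by omega)
      have h2 := ih (i+1) (by omega)
      omega
  intro i hi
  have := key (L.length - 1 - i) i (by omega)
  omega


/-! ### counting -/

lemma countP_range_lt (h a : ℕ) :
    (List.range h).countP (fun c => decide (c < a)) = min a h := by
  induction h with
  | zero => simp
  | succ k ih =>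
    rw [List.range_succ, List.countP_append, ih]
    by_cases hk : k < a
    · simp [List.countP_cons, hk]; omega
    · simp [List.countP_cons, hk]; omega

lemma lt_countP_iff {A : List ℕ} (hs : A.Pairwise (· ≥ ·)) {i c : ℕ} (hi : i < A.length) :
    i < A.countP (fun x => decide (c < x)) ↔ c < A.getD i 0 := by
  constructor
  · intro h
    by_contra hc
    push_neg at hc
    have hsplit : A.countP (fun x => decide (c < x)) =
        (A.take i).countP (fun x => decide (c < x)) +
        (A.drop i).countP (fun x => decide (c < x)) := by
      conv_lhs => rw [← List.take_append_drop i A]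
      exact List.countP_append
    have hdrop : (A.drop i).countP (fun x => decide (c < x)) = 0 := by
      rw [List.countP_eq_zero]
      intro x hx
      rw [List.mem_iff_getElem] at hx
      obtain ⟨j, hj, rfl⟩ := hx
      have hlen : i + j < A.length := by simp at hj; omega
      have : A.getD (i+j) 0 ≤ A.getD i 0 := sorted_getD_le hs (by omega) hlen
      rw [List.getElem_drop]
      simp only [decide_eq_true_eq, not_lt]
      rw [List.getD_eq_getElem _ _ hlen, List.getD_eq_getElem _ _ (by omega)] at this
      rw [List.getD_eq_getElem _ _ (by omega)] at hc
      omega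
    have htake : (A.take i).countP (fun x => decide (c < x)) ≤ i := by
      calc (A.take i).countP _ ≤ (A.take i).length := List.countP_le_length
      _ ≤ i := by simp
    omega
  · intro h
    have hsplit : A.countP (fun x => decide (c < x)) =
        (A.take (i+1)).countP (fun x => decide (c < x)) +
        (A.drop (i+1)).countP (fun x => decide (c < x)) := by
      conv_lhs => rw [← List.take_append_drop (i+1) A]
      exact List.countP_append
    have hlen : (A.take (i+1)).length = i + 1 := by simp; omega
    have htake : (A.take (i+1)).countP (fun x => decide (c < x)) = (A.take (i+1)).length := by
      rw [List.countP_eq_length]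
      intro x hx
      rw [List.mem_iff_getElem] at hx
      obtain ⟨j, hj, rfl⟩ := hx
      rw [hlen] at hj
      have : A.getD i 0 ≤ A.getD j 0 := sorted_getD_le hs (by omega) hi
      have h2 : c < A.getD i 0 := h
      rw [List.getD_eq_getElem _ _ hi] at h2
      rw [List.getElem_take]
      rw [List.getD_eq_getElem _ _ hi, List.getD_eq_getElem _ _ (by omega)] at this
      simp only [decide_eq_true_eq]
      omega
    omega

@[simp] lemma length_conjugate (A : List ℕ) : (conjugate A).length = A.headD 0 := by
  simp [conjugate]

lemma getD_conjugate (A : List ℕ) {c : ℕ} (h : c < A.headD 0) :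
    (conjugate A).getD c 0 = A.countP (fun x => decide (c < x)) := by
  rw [List.getD_eq_getElem _ _ (by simpa using h)]
  simp [conjugate, List.countP_eq_length_filter]

lemma conjugate_entry_le (A : List ℕ) {c : ℕ} :
    (conjugate A).getD c 0 ≤ A.length := by
  by_cases h : c < A.headD 0
  · rw [getD_conjugate A h]; exact List.countP_le_length
  · rw [getD_len_le (by simpa using not_lt.mp h)]; omega

lemma sorted_countP_map (X : List ℕ) (g : ℕ) :
    ((List.range g).map (fun i => X.countP (fun x => decide (i < x)))).Pairwise (· ≥ ·) := by
  rw [List.pairwise_map]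
  have : (List.range g).Pairwise (· < ·) := List.pairwise_lt_range (n := g)
  refine this.imp ?_
  intro i j hij
  exact List.countP_mono_left (fun x _ hx => by
    simp only [decide_eq_true_eq] at *
    omega)

lemma sorted_conjugate (A : List ℕ) : (conjugate A).Pairwise (· ≥ ·) := by
  have h := sorted_countP_map A (A.headD 0)
  simp only [List.countP_eq_length_filter] at h
  exact h

lemma conjugate_pos {A : List ℕ} (hA : A ≠ []) {c : ℕ} (h : c < A.headD 0) :
    0 < (conjugate A).getD c 0 := by
  rw [getD_conjugate A h, List.countP_pos_iff]
  refine ⟨A.headD 0, ?_, by simpa using h⟩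
  cases A with
  | nil => exact absurd rfl hA
  | cons a t => simp

lemma countP_conjugate {A : List ℕ} (hs : A.Pairwise (· ≥ ·)) {i : ℕ} (hi : i < A.length) :
    (conjugate A).countP (fun x => decide (i < x)) = A.getD i 0 := by
  rw [conjugate, List.countP_map]
  have hcongr : ((List.range (A.headD 0)).countP
      ((fun x => decide (i < x)) ∘ fun c => (A.filter (fun x => decide (c < x))).length)) =
      (List.range (A.headD 0)).countP (fun c => decide (c < A.getD i 0)) := by
    apply List.countP_congr
    intro c _
    simp only [Function.comp_apply, ← List.countP_eq_length_filter, decide_eq_decide]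
    simp only [decide_eq_true_eq]
    exact lt_countP_iff hs hi
  rw [hcongr, countP_range_lt]
  have : A.getD i 0 ≤ A.headD 0 := by
    rw [headD_eq_getD]
    exact sorted_getD_le hs (by omega) hi
  omega




lemma range_map_sum (n : ℕ) (f : ℕ → ℕ) :
    ((List.range n).map f).sum = ∑ i ∈ Finset.range n, f i := by
  induction n with
  | zero => simp
  | succ k ih => rw [List.range_succ, Finset.sum_range_succ, List.map_append, List.sum_append, ih]; simp

lemma sum_ite_range (h a : ℕ) :
    (∑ c ∈ Finset.range h, if c < a then 1 else 0) = min a h := by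
  induction h with
  | zero => simp
  | succ k ih => rw [Finset.sum_range_succ, ih]; by_cases hk : k < a <;> simp [hk] <;> omega

lemma sum_counts (A : List ℕ) (h : ℕ) :
    (∑ c ∈ Finset.range h, A.countP (fun x => decide (c < x))) =
      (A.map (fun x => min x h)).sum := by
  induction A with
  | nil => simp
  | cons a t ih =>
    simp only [List.countP_cons, List.map_cons, List.sum_cons]
    rw [Finset.sum_add_distrib, ih]
    have : (∑ c ∈ Finset.range h, if (decide (c < a)) = true then 1 else 0) = min a h := by
      simp only [decide_eq_true_eq]
      exact sum_ite_range h a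
    omega

lemma sum_conjugate {A : List ℕ} (hs : A.Pairwise (· ≥ ·)) : (conjugate A).sum = A.sum := by
  have h1 : (conjugate A).sum = ∑ c ∈ Finset.range (A.headD 0),
      A.countP (fun x => decide (c < x)) := by
    rw [conjugate, range_map_sum]
    simp [List.countP_eq_length_filter]
  rw [h1, sum_counts]
  have : ∀ x ∈ A, min x (A.headD 0) = x := by
    intro x hx
    rw [List.mem_iff_getElem] at hx
    obtain ⟨i, hi, rfl⟩ := hx
    have := sorted_getD_le hs (Nat.zero_le i) hi
    rw [headD_eq_getD]
    rw [List.getD_eq_getElem _ _ hi] at this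
    omega
  rw [List.map_congr_left this]; simp




lemma conjugate_nil_of_headD {A : List ℕ} (h : A.headD 0 = 0) : conjugate A = [] := by
  rw [conjugate, h]
  simp

lemma conjugate_count_map {X : List ℕ} (hs : X.Pairwise (· ≥ ·)) (g : ℕ)
    (hle : ∀ i, i < X.length → X.getD i 0 ≤ g) (hpos : ∀ x ∈ X, 0 < x) :
    conjugate ((List.range g).map (fun i => X.countP (fun x => decide (i < x)))) = X := by
  set A := (List.range g).map (fun i => X.countP (fun x => decide (i < x))) with hA
  rcases eq_or_ne X [] with rfl | hX
  · have : A.headD 0 = 0 := by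
      cases g with
      | zero => simp [hA]
      | succ k => simp [hA, List.range_succ_eq_map]
    exact conjugate_nil_of_headD this
  · have hXlen : 0 < X.length := List.length_pos_iff.mpr hX
    have hg : 0 < g := by
      have h0 := hle 0 hXlen
      have : 0 < X.getD 0 0 := by
        rw [List.getD_eq_getElem _ _ hXlen]
        exact hpos _ (List.getElem_mem _)
      omega
    have hhead : A.headD 0 = X.length := by
      have : A.headD 0 = A.getD 0 0 := headD_eq_getD A
      rw [this, hA, List.getD_eq_getElem _ _ (by simpa using hg)]
      simp only [List.getElem_map, List.getElem_range]
      rw [List.countP_eq_length]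
      intro x hx
      simpa using hpos x hx
    apply List.ext_getElem
    · rw [length_conjugate, hhead]
    · intro c h1 h2
      have hc : c < X.length := by simpa [hhead] using h2
      rw [← List.getD_eq_getElem _ 0 h1, ← List.getD_eq_getElem _ 0 h2]
      rw [getD_conjugate A (by omega)]
      rw [hA, List.countP_map]
      have hcongr : (List.range g).countP
          ((fun x => decide (c < x)) ∘ fun i => X.countP (fun x => decide (i < x))) =
          (List.range g).countP (fun i => decide (i < X.getD c 0)) := by
        apply List.countP_congr
        intro i _
        simp only [Function.comp_apply, decide_eq_true_eq]
        exact lt_countP_iff hs hc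
      rw [hcongr, countP_range_lt]
      have := hle c hc
      omega

lemma sorted_eq_of_conj_eq {A A' : List ℕ} (hs : A.Pairwise (· ≥ ·)) (hs' : A'.Pairwise (· ≥ ·))
    (hlen : A.length = A'.length) (h : conjugate A = conjugate A') : A = A' := by
  apply List.ext_getElem hlen
  intro i h1 h2
  have e1 := countP_conjugate hs (i := i) h1
  have e2 := countP_conjugate hs' (i := i) h2
  rw [h, e2] at e1
  rw [← List.getD_eq_getElem _ 0 h1, ← List.getD_eq_getElem _ 0 h2, e1]




def MidP (m n : ℕ) (x : ℕ × List ℕ × List ℕ) : Prop :=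
  x.2.1.length = x.1 + 1 ∧ x.2.2.length = x.1 + m ∧
  x.2.1.Pairwise (· ≥ ·) ∧ x.2.2.Pairwise (· ≥ ·) ∧
  x.2.2.headD 0 + m ≤ x.2.1.headD 0 ∧
  2 * n = 2 * (x.2.1.sum + x.2.2.sum) + (x.1 + 1) * (x.1 + 2) + (x.1 + m) * (x.1 + m + 1)

def toSeq (x : ℕ × List ℕ × List ℕ) : List ℕ :=
  (addStair x.2.1).reverse ++ addStair x.2.2

def toPar (x : ℕ × List ℕ × List ℕ) : List ℕ :=
  x.2.2.map (· + (x.1 + 1)) ++ (x.1 + 1) :: conjugate x.2.1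

/-! ### toPar structure -/

variable {m n s : ℕ} {A B : List ℕ}

lemma toPar_mk : toPar (s, A, B) = B.map (· + (s + 1)) ++ (s + 1) :: conjugate A := rfl

lemma toSeq_mk : toSeq (s, A, B) = (addStair A).reverse ++ addStair B := rfl

lemma length_toPar (hB : B.length = s + m) :
    (toPar (s, A, B)).length = s + m + 1 + A.headD 0 := by
  rw [toPar_mk]
  simp only [List.length_append, List.length_map, List.length_cons, length_conjugate, hB]
  omega

lemma getD_toPar_lt (hB : B.length = s + m) {j : ℕ} (hj : j < s + m) :
    (toPar (s, A, B)).getD j 0 = B.getD j 0 + (s + 1) := by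
  rw [toPar_mk]
  rw [List.getD_append _ _ _ _ (by simp [hB]; omega)]
  rw [List.getD_eq_getElem _ _ (by simp [hB]; omega), List.getElem_map,
    ← List.getD_eq_getElem _ 0 (by omega)]

lemma getD_toPar_mid (hB : B.length = s + m) :
    (toPar (s, A, B)).getD (s + m) 0 = s + 1 := by
  rw [toPar_mk, List.getD_append_right _ _ _ _ (by simp [hB])]
  simp [hB]

lemma getD_toPar_gt (hB : B.length = s + m) (j : ℕ) :
    (toPar (s, A, B)).getD (s + m + 1 + j) 0 = (conjugate A).getD j 0 := by
  rw [toPar_mk, List.getD_append_right _ _ _ _ (by simp [hB]; omega)]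
  have : s + m + 1 + j - (B.map (· + (s+1))).length = j + 1 := by simp [hB]; omega
  rw [this, List.getD_cons_succ]

lemma sorted_toPar (hA : A.length = s + 1) (hB : B.length = s + m)
    (hsA : A.Pairwise (· ≥ ·)) (hsB : B.Pairwise (· ≥ ·)) :
    (toPar (s, A, B)).Pairwise (· ≥ ·) := by
  rw [toPar_mk, List.pairwise_append]
  refine ⟨?_, ?_, ?_⟩
  · rw [List.pairwise_map]
    exact hsB.imp (fun h => by omega)
  · rw [List.pairwise_cons]
    constructor
    · intro y hy
      rw [List.mem_iff_getElem] at hy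
      obtain ⟨j, hj, rfl⟩ := hy
      have := conjugate_entry_le A (c := j)
      rw [List.getD_eq_getElem _ _ hj] at this
      omega
    · exact sorted_conjugate A
  · intro a ha b hb
    rw [List.mem_map] at ha
    obtain ⟨a', _, rfl⟩ := ha
    rcases List.mem_cons.mp hb with rfl | hb
    · omega
    · rw [List.mem_iff_getElem] at hb
      obtain ⟨j, hj, rfl⟩ := hb
      have := conjugate_entry_le A (c := j)
      rw [List.getD_eq_getElem _ _ hj] at this
      omega

lemma pos_toPar (hA : A.length = s + 1) (hB : B.length = s + m) :
    ∀ x ∈ toPar (s, A, B), 0 < x := by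
  intro x hx
  rw [toPar_mk, List.mem_append] at hx
  rcases hx with hx | hx
  · rw [List.mem_map] at hx
    obtain ⟨a, _, rfl⟩ := hx
    omega
  · rcases List.mem_cons.mp hx with rfl | hx
    · omega
    · rw [List.mem_iff_getElem] at hx
      obtain ⟨j, hj, rfl⟩ := hx
      rw [← List.getD_eq_getElem _ 0 hj]
      apply conjugate_pos
      · intro hnil; rw [hnil] at hA; simp at hA
      · simpa using hj

lemma sum_map_add_const (B : List ℕ) (g : ℕ) :
    (B.map (· + g)).sum = B.sum + B.length * g := by
  induction B with
  | nil => simp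
  | cons b t ih => simp [ih]; ring

lemma sum_toPar (hA : A.length = s + 1) (hB : B.length = s + m) (hsA : A.Pairwise (· ≥ ·)) :
    (toPar (s, A, B)).sum = B.sum + (s + m) * (s + 1) + (s + 1) + A.sum := by
  rw [toPar_mk, List.sum_append, sum_map_add_const, List.sum_cons, sum_conjugate hsA, hB]
  omega

/-- characterization used for injectivity -/
lemma char_toPar (hA : A.length = s + 1) (hB : B.length = s + m)
    (hsA : A.Pairwise (· ≥ ·)) (hsB : B.Pairwise (· ≥ ·)) (c : ℕ) (hc : 1 ≤ c) :
    c ≤ (toPar (s, A, B)).getD (c + m - 1) 0 ↔ c ≤ s + 1 := by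
  constructor
  · intro h
    by_contra hgt
    push_neg at hgt
    have hidx : c + m - 1 = s + m + 1 + (c - s - 2) := by omega
    rw [hidx, getD_toPar_gt hB] at h
    have h2 := conjugate_entry_le A (c := c - s - 2)
    omega
  · intro h
    have hmono : (toPar (s, A, B)).getD (s + m) 0 ≤ (toPar (s, A, B)).getD (c + m - 1) 0 := by
      apply sorted_getD_le (sorted_toPar hA hB hsA hsB) (by omega)
      rw [length_toPar hB]
      omega
    rw [getD_toPar_mid hB] at hmono
    omega




variable {m n s : ℕ} {A B : List ℕ}

def SeqP (m n : ℕ) (l : List ℕ) : Prop :=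
  l.sum = n ∧ (∀ x ∈ l, 0 < x) ∧
    ∃ k : ℕ, k < l.length ∧
      (∀ i : ℕ, i + 1 ≤ k → l.getD i 0 < l.getD (i + 1) 0) ∧
      (∀ i : ℕ, k ≤ i → i + 1 < l.length → l.getD (i + 1) 0 < l.getD i 0) ∧
      (l.length : ℤ) - 2 * ((k : ℤ) + 1) + 1 = (m : ℤ)

lemma length_toSeq (hA : A.length = s + 1) (hB : B.length = s + m) :
    (toSeq (s, A, B)).length = 2 * s + m + 1 := by
  rw [toSeq_mk]; simp [hA, hB]; omega

lemma getD_toSeq_left (hA : A.length = s + 1) {i : ℕ} (hi : i ≤ s) :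
    (toSeq (s, A, B)).getD i 0 = (addStair A).getD (s - i) 0 := by
  rw [toSeq_mk, List.getD_append _ _ _ _ (by simp [hA]; omega),
    getD_reverse (by simp [hA]; omega)]
  congr 1
  simp [hA]

lemma getD_toSeq_right (hA : A.length = s + 1) (j : ℕ) :
    (toSeq (s, A, B)).getD (s + 1 + j) 0 = (addStair B).getD j 0 := by
  rw [toSeq_mk, List.getD_append_right _ _ _ _ (by simp [hA])]
  congr 1
  simp [hA]

lemma toSeq_mem {x : ℕ × List ℕ × List ℕ} (h : MidP m n x) : SeqP m n (toSeq x) := by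
  obtain ⟨s, A, B⟩ := x
  obtain ⟨hA, hB, hsA, hsB, hhead, hsum⟩ := h
  simp only at hA hB hsA hsB hhead hsum
  have hlen := length_toSeq (B := B) hA hB
  refine ⟨?_, ?_, s, ?_, ?_, ?_, ?_⟩
  · -- sum
    rw [toSeq_mk, List.sum_append, List.sum_reverse]
    have h1 := sum_addStair A
    have h2 := sum_addStair B
    rw [hA] at h1
    rw [hB] at h2
    have e1 : (s+1) * (s+1+1) = (s+1)*(s+2) := by ring
    have e2 : (s+m) * (s+m+1) = (s+m)*(s+m+1) := rfl
    omega
  · intro x hx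
    rw [toSeq_mk, List.mem_append, List.mem_reverse] at hx
    rcases hx with hx | hx <;> exact mem_addStair_pos hx
  · omega
  · -- increasing
    intro i hi
    rw [getD_toSeq_left hA (by omega), getD_toSeq_left hA (by omega)]
    have := strictDec_addStair hsA (i := s - i - 1) (by rw [hA]; omega)
    rw [show s - i - 1 + 1 = s - i by omega] at this
    rw [show s - (i+1) = s - i - 1 by omega]
    exact this
  · -- decreasing
    intro i hi hilen
    rcases eq_or_lt_of_le hi with heq | hgt
    · -- peak to first of B
      have heq2 : i = s := heq.symm
      subst heq2
      rw [getD_toSeq_left hA (le_refl _), show i + 1 = i + 1 + 0 by ring, getD_toSeq_right hA]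
      rw [Nat.sub_self, getD_addStair _ (by omega), getD_addStair _ (by omega)]
      rw [hA, hB, headD_eq_getD, headD_eq_getD] at *
      omega
    · obtain ⟨j, rfl⟩ : ∃ j, i = s + 1 + j := ⟨i - s - 1, by omega⟩
      rw [show s + 1 + j + 1 = s + 1 + (j + 1) by ring, getD_toSeq_right hA,
        getD_toSeq_right hA]
      exact strictDec_addStair hsB (by rw [hB]; rw [hlen] at hilen; omega)
  · rw [hlen]
    push_cast
    ring

lemma toSeq_inj {x y : ℕ × List ℕ × List ℕ} (hx : MidP m n x) (hy : MidP m n y)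
    (h : toSeq x = toSeq y) : x = y := by
  obtain ⟨s, A, B⟩ := x
  obtain ⟨s', A', B'⟩ := y
  obtain ⟨hA, hB, -, -, -, -⟩ := hx
  obtain ⟨hA', hB', -, -, -, -⟩ := hy
  simp only at hA hB hA' hB'
  have hss : s = s' := by
    have h1 := length_toSeq (B := B) hA hB
    have h2 := length_toSeq (B := B') hA' hB'
    rw [h] at h1
    omega
  subst hss
  rw [toSeq_mk, toSeq_mk] at h
  have hstruct := List.append_inj h (by simp [hA, hA'])
  have e1 : addStair A = addStair A' := List.reverse_injective hstruct.1
  have e2 := addStair_inj e1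
  have e3 := addStair_inj hstruct.2
  rw [e2, e3]

lemma toSeq_surj {l : List ℕ} (h : SeqP m n l) :
    ∃ x : ℕ × List ℕ × List ℕ, MidP m n x ∧ toSeq x = l := by
  obtain ⟨hsum, hpos, k, hk, hinc, hdec, hrank⟩ := h
  have hlen : l.length = 2 * k + m + 1 := by omega
  set Qp := (l.take (k+1)).reverse with hQp
  set D := l.drop (k+1) with hD
  have hQlen : Qp.length = k + 1 := by simp [hQp]; omega
  have hDlen : D.length = k + m := by simp [hD]; omega
  have hQget : ∀ i, i ≤ k → Qp.getD i 0 = l.getD (k - i) 0 := by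
    intro i hi
    rw [hQp, getD_reverse (by simp; omega), getD_take (by simp) (by simp; omega)]
    congr 1
    rw [List.length_take]
    omega
  have hDget : ∀ i, i < k + m → D.getD i 0 = l.getD (k + 1 + i) 0 := by
    intro i hi
    rw [hD, getD_drop (by omega)]
  have hQdec : ∀ i, i + 1 < Qp.length → Qp.getD (i+1) 0 < Qp.getD i 0 := by
    intro i hi
    rw [hQlen] at hi
    rw [hQget i (by omega), hQget (i+1) (by omega)]
    have := hinc (k - i - 1) (by omega)
    rw [show k - i - 1 + 1 = k - i by omega] at this
    rw [show k - (i+1) = k - i - 1 by omega]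
    exact this
  have hDdec : ∀ i, i + 1 < D.length → D.getD (i+1) 0 < D.getD i 0 := by
    intro i hi
    rw [hDlen] at hi
    rw [hDget i (by omega), hDget (i+1) (by omega)]
    have := hdec (k + 1 + i) (by omega) (by omega)
    rw [show k + 1 + i + 1 = k + 1 + (i + 1) by ring] at this
    exact this
  have hQpos : ∀ x ∈ Qp, 0 < x := by
    intro x hx
    rw [hQp, List.mem_reverse] at hx
    exact hpos x (List.mem_of_mem_take hx)
  have hDpos : ∀ x ∈ D, 0 < x := by
    intro x hx
    exact hpos x (List.mem_of_mem_drop hx)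
  have hQlb := getD_lower hQdec hQpos
  have hDlb := getD_lower hDdec hDpos
  have hQrec : addStair (subStair Qp) = Qp := addStair_subStair hQlb
  have hDrec : addStair (subStair D) = D := addStair_subStair hDlb
  refine ⟨(k, subStair Qp, subStair D), ⟨?_, ?_, ?_, ?_, ?_, ?_⟩, ?_⟩
  · simp [hQlen]
  · simp [hDlen]
  · apply pairwise_ge_of_adj
    intro i hi
    simp only [length_subStair] at hi
    rw [getD_subStair _ (by omega), getD_subStair _ (by omega)]
    have h1 := hQdec i hi
    have h2 := hQlb i (by omega)
    have h3 := hQlb (i+1) hi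
    omega
  · apply pairwise_ge_of_adj
    intro i hi
    simp only [length_subStair] at hi
    rw [getD_subStair _ (by omega), getD_subStair _ (by omega)]
    have h1 := hDdec i hi
    have h2 := hDlb i (by omega)
    have h3 := hDlb (i+1) hi
    omega
  · -- headD condition
    simp only
    rw [headD_eq_getD, headD_eq_getD]
    by_cases hm : k + m = 0
    · have hz : (subStair D).getD 0 0 = 0 :=
        getD_len_le (by rw [length_subStair, hDlen]; omega)
      rw [hz]
      omega
    · have e1 : (subStair D).getD 0 0 = D.getD 0 0 - (D.length - 0) :=
        getD_subStair D (by rw [hDlen]; omega)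
      have e2 : (subStair Qp).getD 0 0 = Qp.getD 0 0 - (Qp.length - 0) :=
        getD_subStair Qp (by rw [hQlen]; omega)
      rw [e1, e2, hQlen, hDlen, hQget 0 (by omega), hDget 0 (by omega)]
      have hpd := hdec k (le_refl _) (by omega)
      have h2 : k + 1 ≤ l.getD (k - 0) 0 := by
        have := hQlb 0 (by omega)
        rw [hQget 0 (by omega), hQlen] at this
        omega
      have h3 : k + m ≤ l.getD (k + 1 + 0) 0 := by
        have := hDlb 0 (by omega)
        rw [hDget 0 (by omega), hDlen] at this
        omega
      simp only [Nat.sub_zero, Nat.add_zero] at *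
      omega
  · -- sum
    simp only
    have h1 := sum_addStair (subStair Qp)
    have h2 := sum_addStair (subStair D)
    rw [hQrec] at h1
    rw [hDrec] at h2
    rw [length_subStair, hQlen] at h1
    rw [length_subStair, hDlen] at h2
    have hls : Qp.sum + D.sum = n := by
      rw [hQp, hD, List.sum_reverse, ← hsum]
      exact List.sum_take_add_sum_drop l (k+1)
    have e1 : (k+1) * (k+1+1) = (k+1)*(k+2) := by ring
    omega
  · rw [toSeq_mk, hQrec, hDrec, hQp, hD, List.reverse_reverse, List.take_append_drop]

noncomputable def seqEquiv (m n : ℕ) :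
    {x : ℕ × List ℕ × List ℕ // MidP m n x} ≃ {l : List ℕ // SeqP m n l} :=
  Equiv.ofBijective (fun x => ⟨toSeq x.1, toSeq_mem x.2⟩) (by
    constructor
    · rintro ⟨x, hx⟩ ⟨y, hy⟩ h
      simp only [Subtype.mk.injEq] at h
      exact Subtype.ext (toSeq_inj hx hy h)
    · rintro ⟨l, hl⟩
      obtain ⟨x, hx, hxl⟩ := toSeq_surj hl
      exact ⟨⟨x, hx⟩, Subtype.ext hxl⟩)



def ParP (m n : ℕ) (l : List ℕ) : Prop :=
  IsPartition l (n - m.choose 2) ∧ rankL l ≤ -2 * (m : ℤ) ∧ InRankSet l ((m : ℤ) - 1)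

variable {m n s : ℕ} {A B : List ℕ}

lemma headD_toPar : (toPar (s, A, B)).headD 0 = B.headD 0 + (s + 1) := by
  cases B with
  | nil => simp [toPar_mk]
  | cons b t => simp [toPar_mk]

lemma key_id (s m : ℕ) :
    (s+1)*(s+2) + (s+m)*(s+m+1) = 2*((s+m)*(s+1)) + 2*(s+1) + m*(m-1) := by
  cases m with
  | zero => ring_nf
  | succ k => simp only [Nat.succ_sub_one]; ring

lemma sum_map_sub_const (T : List ℕ) (c : ℕ) (h : ∀ x ∈ T, c ≤ x) :
    T.sum = (T.map (fun x => x - c)).sum + T.length * c := by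
  induction T with
  | nil => simp
  | cons a t ih =>
    have ha := h a (by simp)
    have ht := ih (fun x hx => h x (by simp [hx]))
    simp only [List.sum_cons, List.map_cons, List.length_cons]
    have : (t.length + 1) * c = t.length * c + c := by ring
    omega

lemma toPar_mem {x : ℕ × List ℕ × List ℕ} (h : MidP m n x) : ParP m n (toPar x) := by
  obtain ⟨s, A, B⟩ := x
  obtain ⟨hA, hB, hsA, hsB, hhead, hsum⟩ := h
  simp only at hA hB hsA hsB hhead hsum
  have hc2 := two_mul_choose_two m
  have hid := key_id s m
  refine ⟨⟨sorted_toPar hA hB hsA hsB, pos_toPar hA hB, ?_⟩, ?_, ?_⟩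
  · rw [sum_toPar hA hB hsA]
    omega
  · rw [rankL, headD_toPar, length_toPar hB]
    have h1 : B.headD 0 + m ≤ A.headD 0 := hhead
    push_cast
    omega
  · refine ⟨s + m, ?_⟩
    rw [getD_toPar_mid hB]
    push_cast
    ring

lemma toPar_inj {x y : ℕ × List ℕ × List ℕ} (hx : MidP m n x) (hy : MidP m n y)
    (h : toPar x = toPar y) : x = y := by
  obtain ⟨s, A, B⟩ := x
  obtain ⟨s', A', B'⟩ := y
  obtain ⟨hA, hB, hsA, hsB, -, -⟩ := hx
  obtain ⟨hA', hB', hsA', hsB', -, -⟩ := hy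
  simp only at hA hB hsA hsB hA' hB' hsA' hsB'
  have hss : s = s' := by
    have c1 := (char_toPar hA hB hsA hsB (s+1) (by omega)).mpr (le_refl _)
    rw [h] at c1
    have d1 := (char_toPar hA' hB' hsA' hsB' (s+1) (by omega)).mp c1
    have c2 := (char_toPar hA' hB' hsA' hsB' (s'+1) (by omega)).mpr (le_refl _)
    rw [← h] at c2
    have d2 := (char_toPar hA hB hsA hsB (s'+1) (by omega)).mp c2
    omega
  subst hss
  rw [toPar_mk, toPar_mk] at h
  have hstruct := List.append_inj h (by simp [hB, hB'])
  have e1 : B = B' := by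
    have : Function.Injective (· + (s + 1)) := add_left_injective (s+1)
    exact List.map_injective_iff.mpr this hstruct.1
  have e2 : conjugate A = conjugate A' := by
    have := hstruct.2
    simpa using this
  have e3 : A = A' := sorted_eq_of_conj_eq hsA hsA' (by omega) e2
  rw [e1, e3]

lemma toPar_surj {l : List ℕ} (h : ParP m n l) :
    ∃ x : ℕ × List ℕ × List ℕ, MidP m n x ∧ toPar x = l := by
  obtain ⟨⟨hsort, hpos, hsum⟩, hrank, j, hj⟩ := h
  rcases eq_or_ne l [] with rfl | hne
  · exfalso
    simp only [rankL] at hrank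
    simp only [List.getD] at hj
    simp at hrank hj
    omega
  have hlpos : 0 < l.length := List.length_pos_iff.mpr hne
  have hl0 : 0 < l.getD 0 0 := by
    rw [List.getD_eq_getElem _ _ hlpos]
    exact hpos _ (List.getElem_mem _)
  have hsum_pos : 0 < l.sum := List.sum_pos l hpos hne
  -- getD j is positive
  have hgdpos : 0 < l.getD j 0 := by
    by_contra hz
    push_neg at hz
    have hz0 : l.getD j 0 = 0 := by omega
    have hjlen : l.length ≤ j := by
      by_contra hlt
      push_neg at hlt
      rw [List.getD_eq_getElem _ _ hlt] at hz0
      have := hpos (l[j]) (List.getElem_mem hlt)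
      omega
    -- m ≥ 1, j = m - 1, and rank gives contradiction
    rw [hz0] at hj
    have hhe : (1 : ℤ) ≤ (l.headD 0 : ℤ) := by
      rw [headD_eq_getD]
      exact_mod_cast hl0
    have hrank' : (l.headD 0 : ℤ) - l.length ≤ -2 * (m:ℤ) := hrank
    omega
  have hjm : m ≤ j := by
    by_contra hc
    push_neg at hc
    have : (l.getD j 0 : ℤ) = (j : ℤ) + 1 - m := by omega
    omega
  set s := j - m with hs
  have hjs : j = s + m := by omega
  have hgd : l.getD (s + m) 0 = s + 1 := by
    rw [← hjs]
    omega
  have hjlen : s + m < l.length := by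
    by_contra hc
    push_neg at hc
    rw [getD_len_le hc] at hgd
    omega
  set bot := l.drop (s + m + 1) with hbot
  set T := l.take (s + m) with hT
  have hTlen : T.length = s + m := by simp [hT]; omega
  have hTget : ∀ i, i < s + m → T.getD i 0 = l.getD i 0 := fun i hi =>
    getD_take hi (by omega)
  have hTge : ∀ i, i < s + m → s + 1 ≤ l.getD i 0 := by
    intro i hi
    rw [← hgd]
    exact sorted_getD_le hsort (by omega) hjlen
  have hbotlen : bot.length = l.length - (s + m + 1) := by simp [hbot]
  have hbotget : ∀ c, c < bot.length → bot.getD c 0 = l.getD (s + m + 1 + c) 0 := by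
    intro c hc
    rw [hbot, getD_drop (by omega)]
  have hbotsorted : bot.Pairwise (· ≥ ·) := hsort.sublist (List.drop_sublist _ _)
  have hbotpos : ∀ x ∈ bot, 0 < x := fun x hx => hpos x (List.mem_of_mem_drop hx)
  have hbotle : ∀ c, c < bot.length → bot.getD c 0 ≤ s + 1 := by
    intro c hc
    rw [hbotget c hc, ← hgd]
    exact sorted_getD_le hsort (by omega) (by omega)
  set B := T.map (fun x => x - (s + 1)) with hBdef
  set A := (List.range (s + 1)).map (fun i => bot.countP (fun x => decide (i < x))) with hAdef
  have hconjA : conjugate A = bot := conjugate_count_map hbotsorted (s+1) hbotle hbotpos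
  have hAlen : A.length = s + 1 := by simp [hAdef]
  have hBlen : B.length = s + m := by simp [hBdef, hTlen]
  have hAsorted : A.Pairwise (· ≥ ·) := sorted_countP_map bot (s+1)
  have hBsorted : B.Pairwise (· ≥ ·) := by
    rw [hBdef, List.pairwise_map]
    exact (hsort.sublist (List.take_sublist _ _)).imp (fun h => by omega)
  have hAhead : A.headD 0 = bot.length := by
    rw [headD_eq_getD, hAdef, List.getD_eq_getElem _ _ (by simp)]
    simp only [List.getElem_map, List.getElem_range]
    rw [List.countP_eq_length]
    intro x hx
    simpa using hbotpos x hx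
  have hAsum : A.sum = bot.sum := by
    have := sum_conjugate hAsorted
    rw [hconjA] at this
    omega
  have hTsum : T.sum = B.sum + (s + m) * (s + 1) := by
    have := sum_map_sub_const T (s+1) (fun x hx => by
      rw [List.mem_iff_getElem] at hx
      obtain ⟨i, hi, rfl⟩ := hx
      rw [hTlen] at hi
      have := hTge i hi
      rw [← hTget i hi, List.getD_eq_getElem _ _ (by omega)] at this
      exact this)
    rw [hTlen] at this
    rw [← hBdef] at this
    omega
  have hlsplit : l = T ++ (s + 1) :: bot := by
    rw [hT, hbot]
    conv_lhs => rw [← List.take_append_drop (s+m) l]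
    congr 1
    rw [List.drop_eq_getElem_cons hjlen]
    congr 1
    rw [← List.getD_eq_getElem _ 0 hjlen]
    exact hgd
  have hlsum : l.sum = T.sum + (s + 1) + bot.sum := by
    conv_lhs => rw [hlsplit]
    simp [List.sum_append]
    omega
  have hnchoose : n = l.sum + m.choose 2 := by
    have h2 := two_mul_choose_two m
    omega
  refine ⟨(s, A, B), ⟨hAlen, hBlen, hAsorted, hBsorted, ?_, ?_⟩, ?_⟩
  · -- headD condition
    simp only
    rw [hAhead]
    by_cases hsm : s + m = 0
    · have : B = [] := List.eq_nil_of_length_eq_zero (by omega)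
      rw [this]
      simp only [List.headD_nil]
      omega
    · have hBhead : B.headD 0 = l.getD 0 0 - (s + 1) := by
        rw [headD_eq_getD, hBdef, List.getD_eq_getElem _ _ (by rw [List.length_map, hTlen]; omega)]
        simp only [List.getElem_map]
        rw [← List.getD_eq_getElem _ 0 (by rw [hTlen]; omega), hTget 0 (by omega)]
      rw [hBhead]
      have hrank' : (l.headD 0 : ℤ) - l.length ≤ -2 * (m:ℤ) := hrank
      rw [headD_eq_getD] at hrank'
      have hlen2 : l.length = s + m + 1 + bot.length := by omega
      have hge0 := hTge 0 (by omega)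
      omega
  · -- sum condition
    simp only
    have hid := key_id s m
    have h2 := two_mul_choose_two m
    omega
  · rw [toPar_mk, hlsplit, hconjA]
    congr 1
    rw [hBdef, List.map_map]
    have : ∀ x ∈ T, (x - (s+1)) + (s+1) = x := by
      intro x hx
      rw [List.mem_iff_getElem] at hx
      obtain ⟨i, hi, rfl⟩ := hx
      rw [hTlen] at hi
      have := hTge i hi
      rw [← hTget i hi, List.getD_eq_getElem _ _ (by omega)] at this
      omega
    calc T.map ((· + (s+1)) ∘ (fun x => x - (s+1))) = T.map id := List.map_congr_left this
    _ = T := List.map_id T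

noncomputable def parEquiv (m n : ℕ) :
    {x : ℕ × List ℕ × List ℕ // MidP m n x} ≃ {l : List ℕ // ParP m n l} :=
  Equiv.ofBijective (fun x => ⟨toPar x.1, toPar_mem x.2⟩) (by
    constructor
    · rintro ⟨x, hx⟩ ⟨y, hy⟩ h
      simp only [Subtype.mk.injEq] at h
      exact Subtype.ext (toPar_inj hx hy h)
    · rintro ⟨l, hl⟩
      obtain ⟨x, hx, hxl⟩ := toPar_surj hl
      exact ⟨⟨x, hx⟩, Subtype.ext hxl⟩)


end StrUni

namespace StrUni

theorem stmt4 (m n : ℕ) :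
    u (m : ℤ) n =
      Nat.card {l : List ℕ //
        IsPartition l (n - m.choose 2) ∧
        rankL l ≤ -2 * (m : ℤ) ∧
        InRankSet l ((m : ℤ) - 1)} := by
  calc u (m : ℤ) n = Nat.card {l : List ℕ // SeqP m n l} := rfl
    _ = Nat.card {l : List ℕ // ParP m n l} :=
        Nat.card_congr ((seqEquiv m n).symm.trans (parEquiv m n))
    _ = _ := rfl

end StrUni
end

section
/- For every natural number n ≥ 1, u(1,n) equals the number of partitions λ of n such that rank(λ) ≤ 0 and −1 does NOT belong to the rank-set of λ. -/
open Nat Finset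

namespace StrUni




private lemma sum_map_range (g : ℕ → ℕ) (n : ℕ) :
    ((List.range n).map g).sum = ∑ i ∈ Finset.range n, g i := by
  induction n with
  | zero => simp
  | succ n ih => rw [List.range_succ, Finset.sum_range_succ]; simp [ih]

private lemma sum_eq_sum_getD (l : List ℕ) :
    l.sum = ∑ j ∈ Finset.range l.length, l.getD j 0 := by
  induction l with
  | nil => simp
  | cons a t ih =>
      rw [List.sum_cons, List.length_cons, Finset.sum_range_succ']
      simp only [List.getD_cons_succ, List.getD_cons_zero]
      rw [← ih, Nat.add_comm]

private lemma sum_range_add (g : ℕ → ℕ) (a b : ℕ) :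
    ∑ i ∈ Finset.range (a + b), g i =
      (∑ i ∈ Finset.range a, g i) + ∑ i ∈ Finset.range b, g (a + i) := by
  induction b with
  | zero => simp
  | succ b ih => rw [← Nat.add_assoc, Finset.sum_range_succ, Finset.sum_range_succ, ih]; ring

private lemma getD_map_range (g : ℕ → ℕ) {n i : ℕ} (h : i < n) :
    ((List.range n).map g).getD i 0 = g i := by
  rw [List.getD_eq_getElem _ _ (by simpa using h)]
  simp

private lemma card_filter_le_range (a d : ℕ) :
    ((Finset.range d).filter (fun i => a ≤ i)).card = d - a := by
  induction d with
  | zero => simp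
  | succ d ih =>
      rw [Finset.range_add_one, Finset.filter_insert]
      by_cases h : a ≤ d
      · rw [if_pos h, Finset.card_insert_of_notMem (fun hx => by simp at hx), ih]; omega
      · rw [if_neg h, ih]; omega

private lemma card_filter_dsub (v d : ℕ) (h : v ≤ d) :
    ((Finset.range d).filter (fun i => d - i ≤ v)).card = v := by
  have he : ((Finset.range d).filter (fun i => d - i ≤ v)) =
      ((Finset.range d).filter (fun i => d - v ≤ i)) := by
    apply Finset.filter_congr; intro i _; constructor <;> (intro; omega)
  rw [he, card_filter_le_range]; omega

private lemma card_filter_succ_le (s m : ℕ) :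
    ((Finset.range m).filter (fun t => t + 1 ≤ s)).card = min s m := by
  induction m with
  | zero => simp
  | succ m ih =>
      rw [Finset.range_add_one, Finset.filter_insert]
      by_cases h : m + 1 ≤ s
      · rw [if_pos h, Finset.card_insert_of_notMem (fun hx => by simp at hx), ih]; omega
      · rw [if_neg h, ih]; omega

private lemma count_antitone_iff {g : ℕ → ℕ} {m : ℕ}
    (hg : ∀ i j, i ≤ j → j < m → g j ≤ g i)
    {s t : ℕ} (ht : t < m) :
    t + 1 ≤ ((Finset.range m).filter (fun j => s ≤ g j)).card ↔ s ≤ g t := by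
  constructor
  · intro h
    by_contra hc
    push_neg at hc
    have hsub : (Finset.range m).filter (fun j => s ≤ g j) ⊆ Finset.range t := by
      intro j hj
      simp only [Finset.mem_filter, Finset.mem_range] at hj ⊢
      by_contra hjt
      push_neg at hjt
      have := hg t j hjt hj.1
      omega
    have := Finset.card_le_card hsub
    simp only [Finset.card_range] at this
    omega
  · intro h
    have hsub : Finset.range (t + 1) ⊆ (Finset.range m).filter (fun j => s ≤ g j) := by
      intro j hj
      simp only [Finset.mem_range] at hj
      simp only [Finset.mem_filter, Finset.mem_range]
      exact ⟨by omega, le_trans h (hg j t (by omega) ht)⟩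
    have := Finset.card_le_card hsub
    simpa using this
  
private lemma count_monotone_iff {g : ℕ → ℕ} {d : ℕ}
    (hg : ∀ i j, i ≤ j → j < d → g i ≤ g j)
    {s i : ℕ} (hi : i < d) :
    d - i ≤ ((Finset.range d).filter (fun j => s ≤ g j)).card ↔ s ≤ g i := by
  constructor
  · intro h
    by_contra hc
    push_neg at hc
    have hsub : (Finset.range d).filter (fun j => s ≤ g j) ⊆
        (Finset.range d).filter (fun j => i + 1 ≤ j) := by
      intro j hj
      simp only [Finset.mem_filter, Finset.mem_range] at hj ⊢
      refine ⟨hj.1, ?_⟩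
      by_contra hji
      push_neg at hji
      have := hg j i (by omega) hi
      omega
    have := Finset.card_le_card hsub
    rw [card_filter_le_range] at this
    omega
  · intro h
    have hsub : (Finset.range d).filter (fun j => i ≤ j) ⊆
        (Finset.range d).filter (fun j => s ≤ g j) := by
      intro j hj
      simp only [Finset.mem_filter, Finset.mem_range] at hj ⊢
      exact ⟨hj.1, le_trans h (hg i j hj.2 hj.1)⟩
    have := Finset.card_le_card hsub
    rw [card_filter_le_range] at this
    omega

private lemma headD_eq_getD_s9 (l : List ℕ) : l.headD 0 = l.getD 0 0 := by
  cases l <;> rfl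

private lemma antitone_getD {l : List ℕ} (hs : l.Pairwise (· ≥ ·)) :
    ∀ i j : ℕ, i ≤ j → l.getD j 0 ≤ l.getD i 0 := by
  intro i j hij
  rcases Nat.lt_or_ge j l.length with hj | hj
  · have hi : i < l.length := lt_of_le_of_lt hij hj
    rw [List.getD_eq_getElem _ _ hi, List.getD_eq_getElem _ _ hj]
    rcases Nat.eq_or_lt_of_le hij with rfl | h
    · exact le_refl _
    · exact List.pairwise_iff_getElem.mp hs i j hi hj h
  · rw [List.getD_eq_default _ _ hj]
    exact Nat.zero_le _

private lemma pos_getD {l : List ℕ} (hp : ∀ x ∈ l, 0 < x) :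
    ∀ j < l.length, 0 < l.getD j 0 := by
  intro j hj
  rw [List.getD_eq_getElem _ _ hj]
  exact hp _ (List.getElem_mem hj)



private lemma exists_getD_le (l : List ℕ) : ∃ j, l.getD j 0 ≤ j :=
  ⟨l.length, by rw [List.getD_eq_default _ _ (le_refl _)]; exact Nat.zero_le _⟩

/-- Durfee-type statistic: least `j` with `λ_{j+1} ≤ j`. -/
def dur' (l : List ℕ) : ℕ := Nat.find (exists_getD_le l)

/-- Partition → strongly unimodal sequence of rank 1. -/
def Fmap (l : List ℕ) : List ℕ :=
  (List.range (dur' l)).map (fun i =>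
      ((Finset.range (l.length - dur' l)).filter
        (fun j => dur' l - i ≤ l.getD (dur' l + j) 0)).card + i + 1) ++
  (List.range (dur' l)).map (fun i => l.getD i 0 - (i + 1))

/-- Strongly unimodal sequence of rank 1 → partition. -/
def Gmap (l : List ℕ) : List ℕ :=
  (List.range (l.length / 2)).map (fun i => l.getD (l.length / 2 + i) 0 + i + 1) ++
  (List.range (l.getD (l.length / 2 - 1) 0 - l.length / 2)).map
      (fun t => ((Finset.range (l.length / 2)).filter
        (fun i => t + i + 2 ≤ l.getD i 0)).card)

private lemma Fmap_length (l : List ℕ) : (Fmap l).length = 2 * dur' l := by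
  simp [Fmap]; omega

private lemma Fmap_getD_left (l : List ℕ) {i : ℕ} (hi : i < dur' l) :
    (Fmap l).getD i 0 =
      ((Finset.range (l.length - dur' l)).filter
        (fun j => dur' l - i ≤ l.getD (dur' l + j) 0)).card + i + 1 := by
  rw [Fmap, List.getD_append _ _ _ _ (by simpa using hi), getD_map_range _ hi]

private lemma Fmap_getD_right (l : List ℕ) {i : ℕ} (hi : i < dur' l) :
    (Fmap l).getD (dur' l + i) 0 = l.getD i 0 - (i + 1) := by
  rw [Fmap, List.getD_append_right _ _ _ _ (by simp)]
  simp only [List.length_map, List.length_range, Nat.add_sub_cancel_left]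
  rw [getD_map_range _ hi]

private lemma Gmap_length (l : List ℕ) :
    (Gmap l).length = l.length / 2 + (l.getD (l.length / 2 - 1) 0 - l.length / 2) := by
  simp [Gmap]

private lemma Gmap_getD_left (l : List ℕ) {i : ℕ} (hi : i < l.length / 2) :
    (Gmap l).getD i 0 = l.getD (l.length / 2 + i) 0 + i + 1 := by
  rw [Gmap, List.getD_append _ _ _ _ (by simpa using hi), getD_map_range _ hi]

private lemma Gmap_getD_right (l : List ℕ) {t : ℕ}
    (ht : t < l.getD (l.length / 2 - 1) 0 - l.length / 2) :
    (Gmap l).getD (l.length / 2 + t) 0 =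
      ((Finset.range (l.length / 2)).filter (fun i => t + i + 2 ≤ l.getD i 0)).card := by
  rw [Gmap, List.getD_append_right _ _ _ _ (by simp)]
  simp only [List.length_map, List.length_range, Nat.add_sub_cancel_left]
  rw [getD_map_range _ ht]



private def UPred (n : ℕ) (l : List ℕ) : Prop :=
  l.sum = n ∧ (∀ x ∈ l, 0 < x) ∧
    ∃ k : ℕ, k < l.length ∧
      (∀ i : ℕ, i + 1 ≤ k → l.getD i 0 < l.getD (i + 1) 0) ∧
      (∀ i : ℕ, k ≤ i → i + 1 < l.length → l.getD (i + 1) 0 < l.getD i 0) ∧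
      (l.length : ℤ) - 2 * ((k : ℤ) + 1) + 1 = 1

private lemma Fmap_spec {n : ℕ} (hn : 1 ≤ n) {l : List ℕ}
    (h : IsPartition l n ∧ rankL l ≤ 0 ∧ ¬ InRankSet l (-1)) :
    UPred n (Fmap l) ∧ Gmap (Fmap l) = l := by
  obtain ⟨⟨hsort, hpos, hsum⟩, hrank, hrs⟩ := h
  have hanti := antitone_getD hsort
  have hposD := pos_getD hpos
  have hfd : l.getD (dur' l) 0 ≤ dur' l := Nat.find_spec (exists_getD_le l)
  have hlow : ∀ j < dur' l, j + 1 ≤ l.getD j 0 := by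
    intro j hj
    have := Nat.find_min (exists_getD_le l) hj
    omega
  have hdL : dur' l ≤ l.length :=
    Nat.find_le (by rw [List.getD_eq_default _ _ (le_refl _)]; exact Nat.zero_le _)
  have hL1 : 1 ≤ l.length := by
    by_contra hc
    have h0 : l = [] := List.length_eq_zero_iff.mp (by omega)
    rw [h0] at hsum
    simp at hsum
    omega
  have hfix : ∀ j : ℕ, l.getD j 0 ≠ j + 1 := by
    intro j hj
    exact hrs ⟨j, by rw [hj]; push_cast; ring⟩
  have hd1 : 1 ≤ dur' l := by
    by_contra hc
    have h0 : dur' l = 0 := by omega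
    have := hposD 0 (by omega)
    rw [h0] at hfd
    omega
  have hlow2 : ∀ j < dur' l, j + 2 ≤ l.getD j 0 := by
    intro j hj
    have := hlow j hj
    have := hfix j
    omega
  have hub : ∀ j, dur' l ≤ j → l.getD j 0 ≤ dur' l :=
    fun j hj => le_trans (hanti (dur' l) j hj) hfd
  have hhead : l.getD 0 0 ≤ l.length := by
    rw [rankL, headD_eq_getD_s9] at hrank
    omega
  have hctop : ((Finset.range (l.length - dur' l)).filter
      (fun j => dur' l - (dur' l - 1) ≤ l.getD (dur' l + j) 0)).card = l.length - dur' l := by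
    rw [Finset.filter_true_of_mem, Finset.card_range]
    intro j hj
    simp only [Finset.mem_range] at hj
    have := hposD (dur' l + j) (by omega)
    omega
  constructor
  · refine ⟨?_, ?_, dur' l - 1, ?_, ?_, ?_, ?_⟩
    · -- sum
      rw [Fmap, List.sum_append, sum_map_range, sum_map_range]
      have F1 : ∑ i ∈ Finset.range (dur' l),
            (((Finset.range (l.length - dur' l)).filter
              (fun j => dur' l - i ≤ l.getD (dur' l + j) 0)).card + i + 1)
          = (∑ i ∈ Finset.range (dur' l),
              ((Finset.range (l.length - dur' l)).filter
                (fun j => dur' l - i ≤ l.getD (dur' l + j) 0)).card)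
            + ∑ i ∈ Finset.range (dur' l), (i + 1) := by
        rw [← Finset.sum_add_distrib]
        exact Finset.sum_congr rfl (fun x _ => by ring)
      have F2 : (∑ i ∈ Finset.range (dur' l), (l.getD i 0 - (i + 1)))
            + ∑ i ∈ Finset.range (dur' l), (i + 1)
          = ∑ i ∈ Finset.range (dur' l), l.getD i 0 := by
        rw [← Finset.sum_add_distrib]
        apply Finset.sum_congr rfl
        intro i hi
        have := hlow i (Finset.mem_range.mp hi)
        omega
      have hswap : (∑ i ∈ Finset.range (dur' l),
            ((Finset.range (l.length - dur' l)).filter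
              (fun j => dur' l - i ≤ l.getD (dur' l + j) 0)).card)
          = ∑ j ∈ Finset.range (l.length - dur' l), l.getD (dur' l + j) 0 := by
        have h1 : ∀ i ∈ Finset.range (dur' l),
            ((Finset.range (l.length - dur' l)).filter
              (fun j => dur' l - i ≤ l.getD (dur' l + j) 0)).card
            = ∑ j ∈ Finset.range (l.length - dur' l),
                if dur' l - i ≤ l.getD (dur' l + j) 0 then 1 else 0 := by
          intro i _
          rw [Finset.card_filter]
        rw [Finset.sum_congr rfl h1, Finset.sum_comm]
        apply Finset.sum_congr rfl
        intro j hj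
        simp only [Finset.mem_range] at hj
        rw [← Finset.card_filter]
        exact card_filter_dsub _ _ (hub (dur' l + j) (by omega))
      have hsplit : ∑ j ∈ Finset.range l.length, l.getD j 0
          = (∑ j ∈ Finset.range (dur' l), l.getD j 0)
            + ∑ j ∈ Finset.range (l.length - dur' l), l.getD (dur' l + j) 0 := by
        have e : dur' l + (l.length - dur' l) = l.length := by omega
        calc ∑ j ∈ Finset.range l.length, l.getD j 0
            = ∑ j ∈ Finset.range (dur' l + (l.length - dur' l)), l.getD j 0 := by rw [e]
          _ = _ := sum_range_add _ _ _
      have hsum' : (∑ j ∈ Finset.range l.length, l.getD j 0) = n := by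
        rw [← sum_eq_sum_getD]
        exact hsum
      rw [F1, hswap]
      omega
    · -- positivity
      intro x hx
      rw [Fmap] at hx
      rcases List.mem_append.mp hx with hx | hx <;> obtain ⟨i, hi, rfl⟩ := List.mem_map.mp hx <;>
        simp only [List.mem_range] at hi
      · omega
      · have := hlow2 i hi
        omega
    · rw [Fmap_length]
      omega
    · -- increasing
      intro i hi
      have hi1 : i < dur' l := by omega
      have hi2 : i + 1 < dur' l := by omega
      rw [Fmap_getD_left l hi1, Fmap_getD_left l hi2]
      have hcc : ((Finset.range (l.length - dur' l)).filter
            (fun j => dur' l - i ≤ l.getD (dur' l + j) 0)).card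
          ≤ ((Finset.range (l.length - dur' l)).filter
            (fun j => dur' l - (i + 1) ≤ l.getD (dur' l + j) 0)).card := by
        apply Finset.card_le_card
        intro x hx
        simp only [Finset.mem_filter] at hx ⊢
        exact ⟨hx.1, by omega⟩
      omega
    · -- decreasing
      intro i hi hi2
      rw [Fmap_length] at hi2
      rcases Nat.lt_or_ge i (dur' l) with hid | hid
      · have e1 : i + 1 = dur' l + 0 := by omega
        have e2 : i = dur' l - 1 := by omega
        rw [e1, Fmap_getD_right l (show 0 < dur' l by omega), Fmap_getD_left l hid, e2, hctop]
        omega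
      · obtain ⟨j, rfl⟩ := Nat.exists_eq_add_of_le hid
        have hj1 : j + 1 < dur' l := by omega
        have e1 : dur' l + j + 1 = dur' l + (j + 1) := by omega
        rw [e1, Fmap_getD_right l hj1, Fmap_getD_right l (show j < dur' l by omega)]
        have h1 := hlow2 (j + 1) hj1
        have h2 := hanti j (j + 1) (by omega)
        omega
    · rw [Fmap_length]
      omega
  · -- roundtrip
    have hhalf : (Fmap l).length / 2 = dur' l := by rw [Fmap_length]; omega
    have hm0 : (Fmap l).getD ((Fmap l).length / 2 - 1) 0 - (Fmap l).length / 2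
        = l.length - dur' l := by
      rw [hhalf, Fmap_getD_left l (show dur' l - 1 < dur' l by omega), hctop]
      omega
    have hm0' : (Fmap l).getD (dur' l - 1) 0 - dur' l = l.length - dur' l := by
      rw [hhalf] at hm0
      exact hm0
    have hGlen : (Gmap (Fmap l)).length = l.length := by
      rw [Gmap_length, hhalf, hm0']
      omega
    apply List.ext_getElem hGlen
    intro j h1 h2
    rw [← List.getD_eq_getElem _ 0 h1, ← List.getD_eq_getElem _ 0 h2]
    rcases Nat.lt_or_ge j (dur' l) with hjd | hjd
    · have hi : j < (Fmap l).length / 2 := by rw [hhalf]; exact hjd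
      rw [Gmap_getD_left (Fmap l) hi, hhalf, Fmap_getD_right l hjd]
      have := hlow j hjd
      omega
    · obtain ⟨t, rfl⟩ := Nat.exists_eq_add_of_le hjd
      have htm : t < l.length - dur' l := by omega
      have ht' : t < (Fmap l).getD ((Fmap l).length / 2 - 1) 0 - (Fmap l).length / 2 := by
        rw [hm0]; exact htm
      have hstep := Gmap_getD_right (Fmap l) ht'
      rw [hhalf] at hstep
      rw [hstep]
      have hcongr : (Finset.range (dur' l)).filter (fun i => t + i + 2 ≤ (Fmap l).getD i 0)
          = (Finset.range (dur' l)).filter (fun i => dur' l - i ≤ l.getD (dur' l + t) 0) := by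
        apply Finset.filter_congr
        intro i hi
        rw [Finset.mem_range] at hi
        rw [Fmap_getD_left l hi]
        have hiff : t + 1 ≤ ((Finset.range (l.length - dur' l)).filter
              (fun j => dur' l - i ≤ l.getD (dur' l + j) 0)).card
            ↔ dur' l - i ≤ l.getD (dur' l + t) 0 :=
          count_antitone_iff (fun a b hab hbm => hanti (dur' l + a) (dur' l + b) (by omega)) htm
        constructor
        · intro hcc
          exact hiff.mp (by omega)
        · intro hdd
          have := hiff.mpr hdd
          omega
      rw [hcongr, card_filter_dsub _ _ (hub (dur' l + t) (by omega))]

private lemma Gmap_spec {n : ℕ} {l : List ℕ} (h : UPred n l) :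
    (IsPartition (Gmap l) n ∧ rankL (Gmap l) ≤ 0 ∧ ¬ InRankSet (Gmap l) (-1))
      ∧ Fmap (Gmap l) = l := by
  obtain ⟨hsum, hpos, k, hk, hinc, hdec, hrk⟩ := h
  have hposD := pos_getD hpos
  have hL : l.length = 2 * k + 2 := by omega
  have hhalf : l.length / 2 = k + 1 := by omega
  have hchainA : ∀ t i, i + t ≤ k → l.getD i 0 + t ≤ l.getD (i + t) 0 := by
    intro t
    induction t with
    | zero => intro i _; simp
    | succ t ih =>
        intro i hit
        have h1 := ih i (by omega)
        have h2 := hinc (i + t) (by omega)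
        have e : i + (t + 1) = i + t + 1 := by omega
        rw [e]
        omega
  have hmonoA : ∀ i j, i ≤ j → j ≤ k → l.getD i 0 + (j - i) ≤ l.getD j 0 := by
    intro i j hij hj
    have := hchainA (j - i) i (by omega)
    have e : i + (j - i) = j := by omega
    rw [e] at this
    omega
  have h0pos : 0 < l.getD 0 0 := hposD 0 (by omega)
  have halow : ∀ i ≤ k, i + 1 ≤ l.getD i 0 := by
    intro i hi
    have := hmonoA 0 i (by omega) hi
    omega
  have hchainB : ∀ t j, k ≤ j → j + t < l.length → l.getD (j + t) 0 + t ≤ l.getD j 0 := by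
    intro t
    induction t with
    | zero => intro j _ _; simp
    | succ t ih =>
        intro j hj hjt
        have h1 := ih j hj (by omega)
        have h2 := hdec (j + t) (by omega) (by omega)
        have e : j + (t + 1) = j + t + 1 := by omega
        rw [e]
        omega
  have hPk : k + 1 ≤ l.getD k 0 := halow k (le_refl k)
  have hb0 : l.getD (k + 1) 0 + 1 ≤ l.getD k 0 := by
    have := hdec k (le_refl k) (by omega)
    omega
  have hbb : ∀ i, i < k + 1 → l.getD (k + 1 + i) 0 + i + 1 ≤ l.getD k 0 := by
    intro i hi
    have := hchainB i (k + 1) (by omega) (by omega)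
    omega
  have hbpos : ∀ i, i < k + 1 → 1 ≤ l.getD (k + 1 + i) 0 := fun i hi => hposD _ (by omega)
  have he_mono : ∀ i j, i ≤ j → j ≤ k → l.getD i 0 - (i + 1) ≤ l.getD j 0 - (j + 1) := by
    intro i j hij hj
    have := hmonoA i j hij hj
    have := halow i (by omega)
    omega
  have he_le : ∀ i ≤ k, l.getD i 0 - (i + 1) ≤ l.getD k 0 - (k + 1) :=
    fun i hi => he_mono i k hi (le_refl k)
  have hmdef : l.getD (l.length / 2 - 1) 0 - l.length / 2 = l.getD k 0 - (k + 1) := by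
    rw [hhalf]
    simp
  have hGA : ∀ i, i < k + 1 → (Gmap l).getD i 0 = l.getD (k + 1 + i) 0 + i + 1 := by
    intro i hi
    have h1 := Gmap_getD_left l (i := i) (by rw [hhalf]; exact hi)
    rw [hhalf] at h1
    exact h1
  have hGB : ∀ t, t < l.getD k 0 - (k + 1) →
      (Gmap l).getD (k + 1 + t) 0
        = ((Finset.range (k + 1)).filter (fun i => t + i + 2 ≤ l.getD i 0)).card := by
    intro t ht
    have h1 := Gmap_getD_right l (t := t) (by rw [hmdef]; exact ht)
    rw [hhalf] at h1
    exact h1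
  have hGlen : (Gmap l).length = (k + 1) + (l.getD k 0 - (k + 1)) := by
    rw [Gmap_length, hmdef, hhalf]
  have hwle : ∀ t, ((Finset.range (k + 1)).filter (fun i => t + i + 2 ≤ l.getD i 0)).card ≤ k + 1 :=
    fun t => le_trans (Finset.card_filter_le _ _) (le_of_eq (Finset.card_range _))
  have hwpos : ∀ t, t < l.getD k 0 - (k + 1) →
      1 ≤ ((Finset.range (k + 1)).filter (fun i => t + i + 2 ≤ l.getD i 0)).card := by
    intro t ht
    have hm : k ∈ (Finset.range (k + 1)).filter (fun i => t + i + 2 ≤ l.getD i 0) := by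
      simp only [Finset.mem_filter, Finset.mem_range]
      exact ⟨by omega, by omega⟩
    exact Finset.card_pos.mpr ⟨k, hm⟩
  have hwmono : ∀ t, ((Finset.range (k + 1)).filter (fun i => t + 1 + i + 2 ≤ l.getD i 0)).card
      ≤ ((Finset.range (k + 1)).filter (fun i => t + i + 2 ≤ l.getD i 0)).card := by
    intro t
    apply Finset.card_le_card
    intro x hx
    simp only [Finset.mem_filter] at hx ⊢
    exact ⟨hx.1, by omega⟩
  have hadj : ∀ i, i + 1 < (Gmap l).length → (Gmap l).getD (i + 1) 0 ≤ (Gmap l).getD i 0 := by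
    intro i hi
    rw [hGlen] at hi
    rcases Nat.lt_or_ge (i + 1) (k + 1) with h1 | h1
    · rw [hGA (i + 1) h1, hGA i (by omega)]
      have := hdec (k + 1 + i) (by omega) (by omega)
      have e : k + 1 + (i + 1) = k + 1 + i + 1 := by omega
      rw [e]
      omega
    · rcases Nat.eq_or_lt_of_le h1 with h2 | h2
      · have e1 : i + 1 = k + 1 + 0 := by omega
        rw [e1, hGB 0 (by omega), hGA i (by omega)]
        have := hwle 0
        omega
      · obtain ⟨t, rfl⟩ := Nat.exists_eq_add_of_le (show k + 1 ≤ i by omega)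
        have ht1 : t + 1 < l.getD k 0 - (k + 1) := by omega
        have e1 : k + 1 + t + 1 = k + 1 + (t + 1) := by omega
        rw [e1, hGB (t + 1) ht1, hGB t (by omega)]
        have := hwmono t
        omega
  have hsorted : (Gmap l).Pairwise (· ≥ ·) := by
    have hc : (Gmap l).IsChain (· ≥ ·) := by
      rw [List.isChain_iff_getElem]
      intro i hih
      have h2 : i + 1 < (Gmap l).length := by omega
      have h1 : i < (Gmap l).length := by omega
      have h3 := hadj i h2
      rw [List.getD_eq_getElem _ _ h2, List.getD_eq_getElem _ _ h1] at h3
      simpa [List.get_eq_getElem, ge_iff_le] using h3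
    exact List.isChain_iff_pairwise.mp hc
  have hposG : ∀ x ∈ Gmap l, 0 < x := by
    intro x hx
    rw [Gmap] at hx
    rcases List.mem_append.mp hx with hx | hx <;> obtain ⟨i, hi, rfl⟩ := List.mem_map.mp hx <;>
      simp only [List.mem_range] at hi
    · omega
    · rw [hmdef] at hi
      rw [hhalf]
      exact hwpos i hi
  have hsumG : (Gmap l).sum = n := by
    rw [Gmap, List.sum_append, sum_map_range, sum_map_range, hmdef, hhalf]
    have F1 : ∑ i ∈ Finset.range (k + 1), (l.getD (k + 1 + i) 0 + i + 1)
        = (∑ i ∈ Finset.range (k + 1), l.getD (k + 1 + i) 0)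
          + ∑ i ∈ Finset.range (k + 1), (i + 1) := by
      rw [← Finset.sum_add_distrib]
      apply Finset.sum_congr rfl
      intro x _
      ring
    have hswap : ∑ t ∈ Finset.range (l.getD k 0 - (k + 1)),
          ((Finset.range (k + 1)).filter (fun i => t + i + 2 ≤ l.getD i 0)).card
        = ∑ i ∈ Finset.range (k + 1), (l.getD i 0 - (i + 1)) := by
      have h1 : ∀ t ∈ Finset.range (l.getD k 0 - (k + 1)),
          ((Finset.range (k + 1)).filter (fun i => t + i + 2 ≤ l.getD i 0)).card
          = ∑ i ∈ Finset.range (k + 1), if t + i + 2 ≤ l.getD i 0 then 1 else 0 := by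
        intro t _
        rw [Finset.card_filter]
      rw [Finset.sum_congr rfl h1, Finset.sum_comm]
      apply Finset.sum_congr rfl
      intro i hi
      simp only [Finset.mem_range] at hi
      have h2 : ∀ t ∈ Finset.range (l.getD k 0 - (k + 1)),
          (if t + i + 2 ≤ l.getD i 0 then 1 else 0)
          = if t + 1 ≤ l.getD i 0 - (i + 1) then 1 else 0 := by
        intro t _
        have hif : (t + i + 2 ≤ l.getD i 0) ↔ (t + 1 ≤ l.getD i 0 - (i + 1)) := by omega
        rw [if_congr hif rfl rfl]
      rw [Finset.sum_congr rfl h2, ← Finset.card_filter, card_filter_succ_le]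
      have := he_le i (by omega)
      omega
    have F2 : (∑ i ∈ Finset.range (k + 1), (l.getD i 0 - (i + 1)))
          + ∑ i ∈ Finset.range (k + 1), (i + 1)
        = ∑ i ∈ Finset.range (k + 1), l.getD i 0 := by
      rw [← Finset.sum_add_distrib]
      apply Finset.sum_congr rfl
      intro i hi
      have h3 : i < k + 1 := Finset.mem_range.mp hi
      have := halow i (by omega)
      omega
    have hsplit : ∑ j ∈ Finset.range l.length, l.getD j 0
        = (∑ j ∈ Finset.range (k + 1), l.getD j 0)
          + ∑ j ∈ Finset.range (k + 1), l.getD (k + 1 + j) 0 := by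
      have e : k + 1 + (k + 1) = l.length := by omega
      calc ∑ j ∈ Finset.range l.length, l.getD j 0
          = ∑ j ∈ Finset.range (k + 1 + (k + 1)), l.getD j 0 := by rw [e]
        _ = _ := sum_range_add _ _ _
    have hsum' : (∑ j ∈ Finset.range l.length, l.getD j 0) = n := by
      rw [← sum_eq_sum_getD]
      exact hsum
    rw [F1, hswap]
    omega
  have hrankG : rankL (Gmap l) ≤ 0 := by
    rw [rankL, headD_eq_getD_s9]
    have h0 : (Gmap l).getD 0 0 = l.getD (k + 1 + 0) 0 + 0 + 1 := hGA 0 (by omega)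
    have hb := hbb 0 (by omega)
    rw [hGlen, h0]
    omega
  have hrsG : ¬ InRankSet (Gmap l) (-1) := by
    rintro ⟨j, hj⟩
    have hj' : (Gmap l).getD j 0 = j + 1 := by omega
    rcases Nat.lt_or_ge j (k + 1) with h1 | h1
    · rw [hGA j h1] at hj'
      have := hbpos j h1
      omega
    · rcases Nat.lt_or_ge j ((Gmap l).length) with h2 | h2
      · rw [hGlen] at h2
        obtain ⟨t, rfl⟩ := Nat.exists_eq_add_of_le h1
        rw [hGB t (by omega)] at hj'
        have := hwle t
        omega
      · rw [List.getD_eq_default _ _ h2] at hj'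
        omega
  refine ⟨⟨⟨hsorted, hposG, hsumG⟩, hrankG, hrsG⟩, ?_⟩
  -- round trip
  have hdur : dur' (Gmap l) = k + 1 := by
    have hle : dur' (Gmap l) ≤ k + 1 := by
      have hp : (Gmap l).getD (k + 1) 0 ≤ k + 1 := by
        rcases Nat.lt_or_ge (k + 1) ((Gmap l).length) with h2 | h2
        · rw [hGlen] at h2
          have h3 := hGB 0 (by omega)
          have e : k + 1 + 0 = k + 1 := by omega
          rw [e] at h3
          rw [h3]
          exact hwle 0
        · rw [List.getD_eq_default _ _ h2]
          omega
      exact Nat.find_le hp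
    have hge : k + 1 ≤ dur' (Gmap l) := by
      have : k + 1 ≤ Nat.find (exists_getD_le (Gmap l)) := by
        rw [Nat.le_find_iff]
        intro j hj hcon
        rw [hGA j hj] at hcon
        omega
      exact this
    omega
  have hFGlen : (Fmap (Gmap l)).length = l.length := by
    rw [Fmap_length, hdur]
    omega
  have hmG : (Gmap l).length - dur' (Gmap l) = l.getD k 0 - (k + 1) := by
    rw [hGlen, hdur]
    omega
  apply List.ext_getElem hFGlen
  intro j h1 h2
  rw [← List.getD_eq_getElem _ 0 h1, ← List.getD_eq_getElem _ 0 h2]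
  rcases Nat.lt_or_ge j (k + 1) with hjd | hjd
  · have hFA := Fmap_getD_left (Gmap l) (i := j) (by rw [hdur]; exact hjd)
    rw [hmG, hdur] at hFA
    rw [hFA]
    have hcongr : (Finset.range (l.getD k 0 - (k + 1))).filter
          (fun t => k + 1 - j ≤ (Gmap l).getD (k + 1 + t) 0)
        = (Finset.range (l.getD k 0 - (k + 1))).filter
            (fun t => t + 1 ≤ l.getD j 0 - (j + 1)) := by
      apply Finset.filter_congr
      intro t ht
      rw [Finset.mem_range] at ht
      rw [hGB t ht]
      have hrw : (Finset.range (k + 1)).filter (fun i => t + i + 2 ≤ l.getD i 0)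
          = (Finset.range (k + 1)).filter (fun i => t + 1 ≤ l.getD i 0 - (i + 1)) := by
        apply Finset.filter_congr
        intro i _
        constructor <;> (intro; omega)
      rw [hrw]
      exact count_monotone_iff (fun a b hab hb => he_mono a b hab (by omega)) hjd
    rw [hcongr, card_filter_succ_le]
    have h3 := he_le j (by omega)
    have h4 := halow j (by omega)
    omega
  · obtain ⟨i, rfl⟩ := Nat.exists_eq_add_of_le hjd
    have hi1 : i < k + 1 := by omega
    have hFB := Fmap_getD_right (Gmap l) (i := i) (by rw [hdur]; exact hi1)
    rw [hdur] at hFB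
    rw [hFB, hGA i hi1]
    omega


theorem stmt9 (n : ℕ) (hn : 1 ≤ n) :
    u 1 n =
      Nat.card {l : List ℕ // IsPartition l n ∧ rankL l ≤ 0 ∧ ¬ InRankSet l (-1)} := by
  have e : {l : List ℕ // UPred n l} ≃
      {l : List ℕ // IsPartition l n ∧ rankL l ≤ 0 ∧ ¬ InRankSet l (-1)} :=
    { toFun := fun x => ⟨Gmap x.1, (Gmap_spec x.2).1⟩
      invFun := fun y => ⟨Fmap y.1, (Fmap_spec hn y.2).1⟩
      left_inv := fun x => Subtype.ext (Gmap_spec x.2).2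
      right_inv := fun y => Subtype.ext (Fmap_spec hn y.2).2 }
  have h1 : u 1 n = Nat.card {l : List ℕ // UPred n l} := rfl
  rw [h1]
  exact Nat.card_congr e


end StrUni
end
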